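/- Let Ω be a finite set with k := |Ω| > 1, let M ⊆ Δ^k be nonempty, and let N be a nonempty closed connected subset of the closed convex hull of M. Then for every n ∈ ℕ and all sets A_1, …, A_n ⊆ Ω, writing R := A_1 × ⋯ × A_n × Ω × Ω × ⋯ ⊆ Ω^ℕ for the corresponding rectangle, one has inf{IT(m)(R) : m ∈ M^ℕ_{→N}} = inf{IT(m)(R) : m ∈ M^ℕ} = inf{∏_{i=1}^n m_i(A_i) : m_1, …, m_n ∈ M}. -/

import Mathlib

open MeasureTheory Filter Topology

noncomputable section

/-- The set of probability vectors over a finite set `Ω`, i.e. the standard simplex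
inside the Euclidean space `ℝ^Ω`. -/
def probVec (Ω : Type*) [Fintype Ω] : Set (EuclideanSpace ℝ Ω) :=
  {p | (∀ x, 0 ≤ p x) ∧ ∑ x, p x = 1}

/-- The relative-frequency vector of the first `n` terms of `ω`. -/
def relFreq {Ω : Type*} [Fintype Ω] [DecidableEq Ω] (ω : ℕ → Ω) (n : ℕ) :
    EuclideanSpace ℝ Ω :=
  WithLp.toLp 2 (fun x => (((Finset.range n).filter fun i => ω i = x).card : ℝ) / n)

/-- The set of cluster points of a sequence in a topological space. -/
def clusterPts {X : Type*} [TopologicalSpace X] (a : ℕ → X) : Set X :=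
  {c | MapClusterPt c atTop a}

/-- Cesàro averages of a sequence of vectors. -/
def cesaro {Ω : Type*} [Fintype Ω] (m : ℕ → EuclideanSpace ℝ Ω) (n : ℕ) :
    EuclideanSpace ℝ Ω :=
  (n : ℝ)⁻¹ • ∑ i ∈ Finset.range n, m i

/-- `μ` is the infinite (Ionescu-Tulcea) independent product of the probability vectors `m i`,
characterized by its values on cylinder sets. -/
def IsIT {Ω : Type*} [Fintype Ω] [MeasurableSpace Ω] (m : ℕ → EuclideanSpace ℝ Ω)
    (μ : Measure (ℕ → Ω)) : Prop :=
  ∀ (n : ℕ) (x : Fin n → Ω),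
    μ {ω | ∀ i : Fin n, ω (i : ℕ) = x i} = ∏ i : Fin n, ENNReal.ofReal (m i.val (x i))

end

/-!
`IT(m)(R) = ∏_{i<n} m_i(A_i)` depends only on the first `n` measures, so it suffices to extend
every prefix `m_0, …, m_{n-1}` in `M` to a sequence in `M` whose Cesàro averages have cluster set
exactly `N`.

Concatenating ever finer chains through a dense sequence of the connected set `N` gives targets
`t_j ∈ N` with `dist (t_j, t_{j+1}) → 0` and cluster set `N`. The extension is then chosen
greedily: at time `i`, with current target `τ ∈ conv M`, pick `x_i ∈ M` with
`⟪x_i - τ, S_i - i τ⟫ ≤ 0`, where `S_i = ∑_{k<i} x_k`. Then `‖S_i - i τ‖²` grows by at most a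
constant per step, so `‖S_b - b τ‖ ≤ ‖S_a - a τ‖ + O(√b)` for `a ≤ b`. Stage `j`, aimed at a point
of `conv M` near `t_j`, lasts from time `2^2^j` to `2^2^(j+1)`; as it is much longer than all
earlier stages together, the averages end it close to its target and stay close to the current
target throughout, so they inherit the cluster set of `t`.
-/

open Finset Relation

section ClusterPts

variable {X : Type*}

lemma Filter.map_atTop_eq_of_monotone_of_surjective {σ : ℕ → ℕ} (hmono : Monotone σ)
    (hsurj : Function.Surjective σ) : map σ atTop = atTop := by
  refine le_antisymm (hmono.tendsto_atTop_atTop fun k => (hsurj k).imp fun _ h => h.ge) ?_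
  intro S hS
  obtain ⟨I, hI⟩ := mem_atTop_sets.mp hS
  refine mem_atTop_sets.mpr ⟨σ I + 1, fun j hj => ?_⟩
  obtain ⟨i, rfl⟩ := hsurj j
  exact hI i (le_of_not_gt fun h => by have := hmono h.le; omega)

lemma clusterPts_comp_of_map_atTop_eq [TopologicalSpace X] {σ : ℕ → ℕ}
    (hσ : map σ atTop = atTop) (u : ℕ → X) : clusterPts (u ∘ σ) = clusterPts u := by
  ext c
  simp only [clusterPts, Set.mem_ofPred_eq, MapClusterPt, ← Filter.map_map, hσ]

lemma clusterPts_eq_of_tendsto_dist [PseudoMetricSpace X] {a b : ℕ → X}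
    (h : Tendsto (fun i => dist (a i) (b i)) atTop (𝓝 0)) : clusterPts a = clusterPts b := by
  suffices key : ∀ a b : ℕ → X, Tendsto (fun i => dist (a i) (b i)) atTop (𝓝 0) →
      clusterPts a ⊆ clusterPts b from
    (key a b h).antisymm (key b a (by simpa only [dist_comm] using h))
  intro a b h c hc
  refine Metric.nhds_basis_ball.mapClusterPt_iff_frequently.2 fun ε hε => ?_
  have hclose := (tendsto_order.1 h).2 _ (half_pos hε)
  refine ((Metric.nhds_basis_ball.mapClusterPt_iff_frequently.1 hc _ (half_pos hε)).and_eventually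
    hclose).mono fun i ⟨hi, hab⟩ => ?_
  rw [Metric.mem_ball] at hi ⊢
  linarith [dist_triangle (b i) (a i) c, dist_comm (a i) (b i)]

lemma TopologicalSpace.IsSeparable.exists_seq_subset_clusterPts [PseudoMetricSpace X]
    {s : Set X} (hs : IsSeparable s) (hne : s.Nonempty) :
    ∃ z : ℕ → X, (∀ r, z r ∈ s) ∧ s ⊆ clusterPts z := by
  obtain ⟨t, hts, htc, hst⟩ := hs.exists_countable_dense_subset
  obtain ⟨y, rfl⟩ := htc.exists_eq_range <|
    closure_nonempty_iff.1 (hne.mono hst)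
  refine ⟨fun r => y r.unpair.1, fun r => hts ⟨_, rfl⟩, hst.trans <| closure_minimal ?_
    isClosed_setOfPred_clusterPt⟩
  rintro _ ⟨g, rfl⟩
  refine MapClusterPt.of_comp (φ := Nat.pair g)
    (tendsto_atTop_mono (Nat.right_le_pair g) tendsto_id) ?_
  simpa [Function.comp_def] using (tendsto_const_nhds (x := y g)).mapClusterPt

end ClusterPts

section Chains

variable {α : Type*} {R : α → α → Prop}

lemma Relation.TransGen.exists_seq {a b : α} (h : TransGen R a b) :
    ∃ L, 0 < L ∧ ∃ f : ℕ → α, f 0 = a ∧ f L = b ∧ ∀ i < L, R (f i) (f (i + 1)) := by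
  induction h with
  | single hab => exact ⟨1, one_pos, fun i => if i = 0 then a else _, rfl, rfl, by simpa using hab⟩
  | @tail b c _ hbc ih =>
    obtain ⟨L, hL, f, hf0, hfL, hf⟩ := ih
    refine ⟨L + 1, L.succ_pos, fun i => if i ≤ L then f i else c, by simpa using hf0, by simp,
      fun i hi => ?_⟩
    rcases Nat.lt_succ_iff_lt_or_eq.mp hi with hi | rfl
    · simpa [hi.le, Nat.succ_le_of_lt hi] using hf i hi
    · simpa [hfL] using hbc

theorem exists_seq_rel_of_transGen (a : ℕ → α) (h : ∀ r, TransGen R (a r) (a (r + 1))) :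
    ∃ (u : ℕ → α) (φ : ℕ → ℕ), StrictMono φ ∧ (∀ r, u (φ r) = a r) ∧ ∀ j, R (u j) (u (j + 1)) := by
  choose L hL f hf0 hfL hf using fun r => (h r).exists_seq
  -- `pos j = (r, i)`: the `j`-th term of the concatenation is the `i`-th term of the `r`-th chain
  let pos : ℕ → ℕ × ℕ := fun j => Nat.rec (0, 0)
    (fun _ p => if p.2 + 1 < L p.1 then (p.1, p.2 + 1) else (p.1 + 1, 0)) j
  have hpos_succ : ∀ j, pos (j + 1) = if (pos j).2 + 1 < L (pos j).1
      then ((pos j).1, (pos j).2 + 1) else ((pos j).1 + 1, 0) := fun _ => rfl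
  have hpos_lt : ∀ j, (pos j).2 < L (pos j).1 := by
    intro j
    induction j with
    | zero => exact hL 0
    | succ j ih => rw [hpos_succ]; split_ifs with h; exacts [h, hL _]
  have hblock : ∀ j r, pos j = (r, 0) → ∀ i < L r, pos (j + i) = (r, i) := by
    intro j r hj i
    induction i with
    | zero => exact fun _ => hj
    | succ i ih => intro hi; rw [← add_assoc, hpos_succ, ih (by omega)]; simp [hi]
  let φ : ℕ → ℕ := fun r => ∑ k ∈ range r, L k
  have hstart : ∀ r, pos (φ r) = (r, 0) := by
    intro r
    induction r with
    | zero => rfl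
    | succ r ih =>
      have hφ : φ (r + 1) = φ r + (L r - 1) + 1 := by
        simp only [φ, sum_range_succ]; have := hL r; omega
      rw [hφ, hpos_succ, hblock _ _ ih _ (by have := hL r; omega)]
      simp [Nat.sub_add_cancel (hL r)]
  refine ⟨fun j => f (pos j).1 (pos j).2, φ, strictMono_nat_of_lt_succ fun r => ?_,
    fun r => by simp [hstart, hf0], fun j => ?_⟩
  · simpa [φ, sum_range_succ] using hL r
  · have hlt := hpos_lt j
    show R (f (pos j).1 (pos j).2) (f (pos (j + 1)).1 (pos (j + 1)).2)
    rw [hpos_succ]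
    split_ifs with hj
    · exact hf _ _ hlt
    · have hL' : (pos j).2 + 1 = L (pos j).1 := by omega
      simpa [hf0, ← hfL, hL'] using hf _ _ hlt

end Chains

section Connected

variable {X : Type*} [PseudoMetricSpace X] {s : Set X}

lemma IsPreconnected.reflTransGen_dist_lt (hs : IsPreconnected s) {ε : ℝ} (hε : 0 < ε) {x y : X}
    (hx : x ∈ s) (hy : y ∈ s) : ReflTransGen (fun a b => a ∈ s ∧ b ∈ s ∧ dist a b < ε) x y := by
  have : Std.Symm fun a b => a ∈ s ∧ b ∈ s ∧ dist a b < ε :=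
    ⟨fun a b h => ⟨h.2.1, h.1, by rw [dist_comm]; exact h.2.2⟩⟩
  refine hs.induction₂ (ReflTransGen fun a b => a ∈ s ∧ b ∈ s ∧ dist a b < ε) (fun x hx => ?_)
    (fun _ _ _ _ _ _ h₁ h₂ => h₁.trans h₂) (fun _ _ _ _ h => symm h) hx hy
  filter_upwards [self_mem_nhdsWithin, mem_nhdsWithin_of_mem_nhds (Metric.ball_mem_nhds x hε)]
    with y hys hyx
  exact .single ⟨hx, hys, by rwa [dist_comm]⟩

theorem IsPreconnected.exists_seq_tendsto_dist_succ (hs : IsPreconnected s)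
    (hsep : TopologicalSpace.IsSeparable s) (hne : s.Nonempty) :
    ∃ u : ℕ → X, (∀ j, u j ∈ s) ∧ Tendsto (fun j => dist (u j) (u (j + 1))) atTop (𝓝 0) ∧
      s ⊆ clusterPts u := by
  obtain ⟨z, hzs, hz⟩ := hsep.exists_seq_subset_clusterPts hne
  -- pass through `z r` at level `r`: a step from level `k` is shorter than `1 / (k + 1)`
  let R : X × ℕ → X × ℕ → Prop := fun p q =>
    p.1 ∈ s ∧ q.1 ∈ s ∧ p.2 ≤ q.2 ∧ dist p.1 q.1 < 1 / ((p.2 : ℝ) + 1)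
  have hR : ∀ r, TransGen R (z r, r) (z (r + 1), r + 1) := by
    intro r
    have hchain := hs.reflTransGen_dist_lt (ε := 1 / (((r + 1 : ℕ) : ℝ) + 1)) (by positivity)
      (hzs r) (hzs (r + 1))
    exact .head' (b := (z r, r + 1)) ⟨hzs r, hzs r, r.le_succ, by simp; positivity⟩ <|
      ReflTransGen.lift (fun x => (x, r + 1)) (fun _ _ h => ⟨h.1, h.2.1, le_rfl, h.2.2⟩) _ _ hchain
  obtain ⟨v, φ, hφ, hvφ, hv⟩ := exists_seq_rel_of_transGen _ hR
  have hlevel : Tendsto (fun j => (v j).2) atTop atTop :=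
    (monotone_nat_of_le_succ fun j => (hv j).2.2.1).tendsto_atTop_atTop
      fun r => ⟨φ r, by rw [hvφ]⟩
  refine ⟨fun j => (v j).1, fun j => (hv j).1, ?_, hz.trans fun c hc => ?_⟩
  · exact squeeze_zero (fun _ => dist_nonneg) (fun j => (hv j).2.2.2.le)
      (tendsto_one_div_add_atTop_nhds_zero_nat.comp hlevel)
  · have hvz : (fun j => (v j).1) ∘ φ = z := funext fun r => by simp [hvφ]
    exact MapClusterPt.of_comp hφ.tendsto_atTop (hvz ▸ hc)

end Connected

lemma log_log_le_iff {i k : ℕ} : Nat.log 2 (Nat.log 2 i) ≤ k ↔ i < 2 ^ 2 ^ (k + 1) := by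
  rcases eq_or_ne (Nat.log 2 i) 0 with h | h
  · have hi : i < 2 := by simpa using Nat.log_eq_zero_iff.1 h
    simp only [h, Nat.log_zero_right, zero_le, true_iff]
    calc i < 2 := hi
      _ ≤ 2 ^ 2 ^ (k + 1) := Nat.le_self_pow (by positivity) 2
  · have hi : i ≠ 0 := by rintro rfl; simp at h
    rw [← Nat.lt_succ_iff, Nat.log_lt_iff_lt_pow one_lt_two h,
      Nat.log_lt_iff_lt_pow one_lt_two hi]

lemma log_log_two_pow_two_pow (k : ℕ) : Nat.log 2 (Nat.log 2 (2 ^ 2 ^ k)) = k := by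
  simp [Nat.log_pow]

lemma monotone_log_log : Monotone fun i => Nat.log 2 (Nat.log 2 i) :=
  fun _ _ h => Nat.log_mono_right (Nat.log_mono_right h)

lemma map_log_log_atTop : map (fun i => Nat.log 2 (Nat.log 2 i)) atTop = atTop :=
  map_atTop_eq_of_monotone_of_surjective monotone_log_log fun k => ⟨_, log_log_two_pow_two_pow k⟩

lemma dist_inv_smul_sum_range {E : Type*} [NormedAddCommGroup E] [NormedSpace ℝ E]
    (x : ℕ → E) (τ : E) {i : ℕ} (hi : i ≠ 0) :
    dist ((i : ℝ)⁻¹ • ∑ k ∈ range i, x k) τ = ‖∑ k ∈ range i, (x k - τ)‖ / i := by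
  have hi' : (i : ℝ) ≠ 0 := Nat.cast_ne_zero.2 hi
  rw [dist_eq_norm, sum_sub_distrib, sum_const, card_range, ← Nat.cast_smul_eq_nsmul ℝ,
    ← inv_smul_smul₀ hi' τ, ← smul_sub, norm_smul, norm_inv, Real.norm_natCast, inv_mul_eq_div,
    smul_inv_smul₀ hi']

section Greedy

variable {E : Type*} [NormedAddCommGroup E] [InnerProductSpace ℝ E]

lemma exists_seq_forall_sum_range {β : Type*} [AddCommMonoid β] {P : ℕ → β → β → Prop}
    (h : ∀ i s, ∃ y, P i s y) : ∃ x : ℕ → β, ∀ i, P i (∑ k ∈ range i, x k) (x i) := by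
  choose g hg using h
  let S : ℕ → β := fun i => Nat.rec 0 (fun i s => s + g i s) i
  have hS : ∀ i, S i = ∑ k ∈ range i, g k (S k) := by
    intro i
    induction i with
    | zero => rfl
    | succ i ih => rw [sum_range_succ, ← ih]
  exact ⟨fun i => g i (S i), fun i => hS i ▸ hg i (S i)⟩

lemma exists_mem_inner_sub_nonpos_of_mem_convexHull {M : Set E} {τ : E}
    (hτ : τ ∈ convexHull ℝ M) (v : E) : ∃ p ∈ M, inner ℝ (p - τ) v ≤ 0 := by
  obtain ⟨p, hp, hle⟩ := (((innerSL ℝ v : E →L[ℝ] ℝ) : E →ₗ[ℝ] ℝ).concaveOn convex_univ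
    ).exists_le_of_mem_convexHull (Set.subset_univ M) hτ
  refine ⟨p, hp, ?_⟩
  simp only [ContinuousLinearMap.coe_coe, innerSL_apply_apply] at hle
  rw [inner_sub_left, real_inner_comm v p, real_inner_comm v τ]
  linarith

theorem exists_seq_inner_sum_range_nonpos {M : Set E} {T : ℕ → E} (hT : ∀ i, T i ∈ convexHull ℝ M)
    {m : ℕ → E} (hm : ∀ i, m i ∈ M) (n : ℕ) :
    ∃ x : ℕ → E, (∀ i, x i ∈ M) ∧ (∀ i < n, x i = m i) ∧
      ∀ i, n ≤ i → inner ℝ (x i - T i) (∑ k ∈ range i, (x k - T i)) ≤ 0 := by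
  have hstep : ∀ i (s : E), ∃ y, y ∈ M ∧ (i < n → y = m i) ∧
      (n ≤ i → inner ℝ (y - T i) (s - (i : ℝ) • T i) ≤ 0) := by
    intro i s
    by_cases hi : i < n
    · exact ⟨m i, hm i, fun _ => rfl, fun h => absurd h (not_le.2 hi)⟩
    · obtain ⟨p, hp, hle⟩ :=
        exists_mem_inner_sub_nonpos_of_mem_convexHull (hT i) (s - (i : ℝ) • T i)
      exact ⟨p, hp, fun h => absurd h hi, fun _ => hle⟩
  obtain ⟨x, hx⟩ := exists_seq_forall_sum_range hstep
  refine ⟨x, fun i => (hx i).1, fun i hi => (hx i).2.1 hi, fun i hi => ?_⟩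
  rw [sum_sub_distrib, sum_const, card_range, ← Nat.cast_smul_eq_nsmul ℝ]
  exact (hx i).2.2 hi

lemma norm_sum_range_sq_le_of_inner_nonpos (y : ℕ → E) {C : ℝ} {a b : ℕ} (hab : a ≤ b)
    (hy : ∀ i, a ≤ i → i < b → ‖y i‖ ≤ C)
    (hinner : ∀ i, a ≤ i → i < b → inner ℝ (y i) (∑ k ∈ range i, y k) ≤ 0) :
    ‖∑ k ∈ range b, y k‖ ^ 2 ≤ ‖∑ k ∈ range a, y k‖ ^ 2 + (b - a) * C ^ 2 := by
  induction b, hab using Nat.le_induction with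
  | base => simp
  | succ b hab ih =>
    have hprev := ih (fun i hi hib => hy i hi (by omega)) (fun i hi hib => hinner i hi (by omega))
    have hyb : ‖y b‖ ^ 2 ≤ C ^ 2 := pow_le_pow_left₀ (norm_nonneg _) (hy b hab (by omega)) 2
    have hinb := hinner b hab (by omega)
    rw [sum_range_succ, add_comm, norm_add_sq_real]
    push_cast
    linarith

lemma norm_sum_range_le_of_inner_nonpos (y : ℕ → E) {C : ℝ} (hC : 0 ≤ C) {a b : ℕ} (hab : a ≤ b)
    (hy : ∀ i, a ≤ i → i < b → ‖y i‖ ≤ C)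
    (hinner : ∀ i, a ≤ i → i < b → inner ℝ (y i) (∑ k ∈ range i, y k) ≤ 0) :
    ‖∑ k ∈ range b, y k‖ ≤ ‖∑ k ∈ range a, y k‖ + C * √b := by
  have hsq := norm_sum_range_sq_le_of_inner_nonpos y hab hy hinner
  have hb : (0 : ℝ) ≤ b := b.cast_nonneg
  have hsqrt := Real.sq_sqrt hb
  refine le_of_sq_le_sq ?_ (by positivity)
  nlinarith [norm_nonneg (∑ k ∈ range a, y k), mul_nonneg hC (Real.sqrt_nonneg b)]

lemma norm_sum_range_sub_le_of_two_targets (x : ℕ → E) {τ₀ τ₁ : E} {C : ℝ} (hC : 0 ≤ C)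
    {a₀ a₁ b : ℕ} (h₀₁ : a₀ ≤ a₁) (h₁b : a₁ ≤ b) (hx₀ : ∀ i, ‖x i - τ₀‖ ≤ C)
    (hx₁ : ∀ i, ‖x i - τ₁‖ ≤ C)
    (hg₀ : ∀ i, a₀ ≤ i → i < a₁ → inner ℝ (x i - τ₀) (∑ k ∈ range i, (x k - τ₀)) ≤ 0)
    (hg₁ : ∀ i, a₁ ≤ i → i < b → inner ℝ (x i - τ₁) (∑ k ∈ range i, (x k - τ₁)) ≤ 0) :
    ‖∑ k ∈ range b, (x k - τ₁)‖ ≤ a₀ * C + C * √a₁ + a₁ * dist τ₀ τ₁ + C * √b := by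
  have hshift : ∑ k ∈ range a₁, (x k - τ₁) =
      ∑ k ∈ range a₁, (x k - τ₀) + (a₁ : ℝ) • (τ₀ - τ₁) := by
    simp only [sum_sub_distrib, sum_const, card_range, smul_sub, Nat.cast_smul_eq_nsmul]
    abel
  calc ‖∑ k ∈ range b, (x k - τ₁)‖ ≤ ‖∑ k ∈ range a₁, (x k - τ₁)‖ + C * √b :=
        norm_sum_range_le_of_inner_nonpos _ hC h₁b (fun i _ _ => hx₁ i) hg₁
    _ ≤ ‖∑ k ∈ range a₁, (x k - τ₀)‖ + a₁ * dist τ₀ τ₁ + C * √b := by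
        rw [hshift, dist_eq_norm]
        grw [norm_add_le, norm_smul, Real.norm_natCast]
    _ ≤ ‖∑ k ∈ range a₀, (x k - τ₀)‖ + C * √a₁ + a₁ * dist τ₀ τ₁ + C * √b := by
        grw [norm_sum_range_le_of_inner_nonpos _ hC h₀₁ (fun i _ _ => hx₀ i) hg₀]
    _ ≤ a₀ * C + C * √a₁ + a₁ * dist τ₀ τ₁ + C * √b := by
        grw [norm_sum_le, sum_le_sum fun i _ => hx₀ i]
        simp

lemma dist_average_le_of_inner_nonpos {x τ : ℕ → E} {R : ℝ} (hR : 0 ≤ R)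
    (hxτ : ∀ i j, ‖x i - τ j‖ ≤ 2 * R) {n : ℕ}
    (hx : ∀ i, n ≤ i → inner ℝ (x i - τ (Nat.log 2 (Nat.log 2 i)))
      (∑ k ∈ range i, (x k - τ (Nat.log 2 (Nat.log 2 i)))) ≤ 0)
    {k i : ℕ} (hk : n ≤ 2 ^ 2 ^ k) (hi : Nat.log 2 (Nat.log 2 i) = k + 1) :
    dist ((i : ℝ)⁻¹ • ∑ j ∈ range i, x j) (τ (k + 1)) ≤
      6 * R / (2 ^ 2 ^ k : ℕ) + dist (τ k) (τ (k + 1)) := by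
  set A : ℕ := 2 ^ 2 ^ k with hA
  have hA2 : 2 ^ 2 ^ (k + 1) = A ^ 2 := by rw [hA, ← pow_mul, ← pow_succ]
  have hiA : A ^ 2 ≤ i := hA2 ▸ not_lt.1 fun h => by have := log_log_le_iff.2 h; omega
  have hbound := norm_sum_range_sub_le_of_two_targets x (by positivity : 0 ≤ 2 * R)
    (Nat.le_self_pow two_ne_zero A) hiA (fun i => hxτ i k) (fun i => hxτ i (k + 1))
    (fun j hj hjA => ?_) (fun j hj hji => ?_)
  · have hA1 : (1 : ℝ) ≤ A := by exact_mod_cast Nat.one_le_two_pow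
    have hiA' : (A : ℝ) ^ 2 ≤ i := by exact_mod_cast hiA
    have hi0 : (0 : ℝ) < i := lt_of_lt_of_le (by positivity) hiA'
    have hAi : (A : ℝ) ≤ i / A := by rw [le_div_iff₀ (by positivity)]; nlinarith
    have hsqrti : √i ≤ i / A := by
      rw [le_div_iff₀ (by positivity)]
      nlinarith [Real.mul_self_sqrt hi0.le, Real.sqrt_nonneg i, Real.le_sqrt_of_sq_le hiA']
    have hd : 0 ≤ dist (τ k) (τ (k + 1)) := dist_nonneg
    have hsqrtA : √((A ^ 2 : ℕ) : ℝ) = A := by push_cast; exact Real.sqrt_sq (by positivity)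
    rw [hsqrtA] at hbound
    push_cast at hbound
    rw [dist_inv_smul_sum_range x _ (by exact_mod_cast hi0.ne'), div_le_iff₀ hi0]
    calc _ ≤ _ := hbound
      _ ≤ 6 * R * (i / A) + dist (τ k) (τ (k + 1)) * i := by
        nlinarith [mul_le_mul_of_nonneg_left hAi hR, mul_le_mul_of_nonneg_left hsqrti hR,
          mul_le_mul_of_nonneg_right hiA' hd]
      _ = _ := by ring
  · have hj' : Nat.log 2 (Nat.log 2 j) = k := le_antisymm (log_log_le_iff.2 (hA2 ▸ hjA))
      (log_log_two_pow_two_pow k ▸ monotone_log_log hj)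
    simpa [hj'] using hx j (hk.trans hj)
  · have hj' : Nat.log 2 (Nat.log 2 j) = k + 1 := le_antisymm (hi ▸ monotone_log_log hji.le)
      (log_log_two_pow_two_pow (k + 1) ▸ hA2 ▸ monotone_log_log hj)
    simpa [hj'] using hx j (hk.trans ((Nat.le_self_pow two_ne_zero A).trans hj))

theorem exists_seq_clusterPts_average_eq_of_mem_convexHull {M : Set E}
    (hM : Bornology.IsBounded M) {τ : ℕ → E} (hτM : ∀ j, τ j ∈ convexHull ℝ M)
    (hτ : Tendsto (fun j => dist (τ j) (τ (j + 1))) atTop (𝓝 0)) {m : ℕ → E} (hm : ∀ i, m i ∈ M)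
    (n : ℕ) : ∃ x : ℕ → E, (∀ i, x i ∈ M) ∧ (∀ i < n, x i = m i) ∧
      clusterPts (fun i => (i : ℝ)⁻¹ • ∑ k ∈ range i, x k) = clusterPts τ := by
  obtain ⟨R, hR⟩ := hM.subset_closedBall 0
  have hτR : ∀ j, ‖τ j‖ ≤ R := fun j =>
    mem_closedBall_zero_iff.1 <| convexHull_min hR (convex_closedBall 0 R) (hτM j)
  -- stage `k`, with target `τ k`, runs from time `2 ^ 2 ^ k` to time `2 ^ 2 ^ (k + 1)`
  set σ : ℕ → ℕ := fun i => Nat.log 2 (Nat.log 2 i)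
  obtain ⟨x, hxM, hxm, hx⟩ := exists_seq_inner_sum_range_nonpos (fun i => hτM (σ i)) hm n
  have hxτ : ∀ i j, ‖x i - τ j‖ ≤ 2 * R := fun i j => (norm_sub_le _ _).trans <| by
    linarith [mem_closedBall_zero_iff.1 (hR (hxM i)), hτR j]
  have hη : Tendsto (fun k => 6 * R / (2 ^ 2 ^ k : ℕ) + dist (τ k) (τ (k + 1))) atTop (𝓝 0) := by
    have hpow : Tendsto (fun k => 2 ^ 2 ^ k) atTop atTop :=
      (tendsto_pow_atTop_atTop_of_one_lt one_lt_two).comp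
        (tendsto_pow_atTop_atTop_of_one_lt one_lt_two)
    simpa using ((tendsto_const_div_atTop_nhds_zero_nat (6 * R)).comp hpow).add hτ
  have hσ : Tendsto σ atTop atTop := map_log_log_atTop.le
  refine ⟨x, hxM, hxm, ?_⟩
  rw [← clusterPts_comp_of_map_atTop_eq map_log_log_atTop τ]
  refine clusterPts_eq_of_tendsto_dist <| squeeze_zero' (.of_forall fun _ => dist_nonneg) ?_
    (hη.comp ((tendsto_sub_atTop_nat 1).comp hσ))
  filter_upwards [hσ.eventually_ge_atTop (n + 1)] with i hi
  obtain ⟨k, hk⟩ : ∃ k, σ i = k + 1 := ⟨σ i - 1, by omega⟩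
  have hn : n ≤ 2 ^ 2 ^ k :=
    calc n ≤ k := by omega
      _ ≤ 2 ^ 2 ^ k := (Nat.lt_two_pow_self.trans (Nat.pow_lt_pow_right one_lt_two
        Nat.lt_two_pow_self)).le
  simp only [Function.comp_apply, hk, Nat.add_sub_cancel]
  rw [show Nat.log 2 (Nat.log 2 i) = k + 1 from hk]
  exact dist_average_le_of_inner_nonpos ((norm_nonneg _).trans (hτR 0)) hxτ hx hn hk

theorem exists_seq_clusterPts_average_eq {M : Set E} (hM : Bornology.IsBounded M) {τ : ℕ → E}
    (hτM : ∀ j, τ j ∈ closure (convexHull ℝ M))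
    (hτ : Tendsto (fun j => dist (τ j) (τ (j + 1))) atTop (𝓝 0)) {m : ℕ → E} (hm : ∀ i, m i ∈ M)
    (n : ℕ) : ∃ x : ℕ → E, (∀ i, x i ∈ M) ∧ (∀ i < n, x i = m i) ∧
      clusterPts (fun i => (i : ℝ)⁻¹ • ∑ k ∈ range i, x k) = clusterPts τ := by
  have happrox : ∀ j, ∃ τ' ∈ convexHull ℝ M, dist τ' (τ j) < 1 / ((j : ℝ) + 1) := fun j => by
    obtain ⟨τ', hτ', hd⟩ := Metric.mem_closure_iff.1 (hτM j) _ Nat.one_div_pos_of_nat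
    exact ⟨τ', hτ', by rwa [dist_comm]⟩
  choose τ' hτ'M hτ' using happrox
  have hclose : Tendsto (fun j => dist (τ' j) (τ j)) atTop (𝓝 0) :=
    squeeze_zero (fun _ => dist_nonneg) (fun j => (hτ' j).le)
      tendsto_one_div_add_atTop_nhds_zero_nat
  have hτ'steps : Tendsto (fun j => dist (τ' j) (τ' (j + 1))) atTop (𝓝 0) := by
    have hsum := (hclose.add hτ).add (hclose.comp (tendsto_add_atTop_nat 1))
    simp only [add_zero] at hsum
    refine squeeze_zero (fun _ => dist_nonneg) (fun j => ?_) hsum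
    simpa [dist_comm (τ (j + 1))] using dist_triangle4 (τ' j) (τ j) (τ (j + 1)) (τ' (j + 1))
  obtain ⟨x, hxM, hxm, hx⟩ :=
    exists_seq_clusterPts_average_eq_of_mem_convexHull hM hτ'M hτ'steps hm n
  exact ⟨x, hxM, hxm, hx.trans (clusterPts_eq_of_tendsto_dist hclose)⟩

end Greedy

section Probability

variable {Ω : Type*} [Fintype Ω]

lemma norm_le_one_of_mem_probVec {p : EuclideanSpace ℝ Ω} (hp : p ∈ probVec Ω) : ‖p‖ ≤ 1 := by
  rw [EuclideanSpace.norm_eq, Real.sqrt_le_one]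
  calc ∑ x, ‖p x‖ ^ 2 = ∑ x, p x ^ 2 := by simp [Real.norm_eq_abs, sq_abs]
    _ ≤ (∑ x, p x) ^ 2 := sum_sq_le_sq_sum_of_nonneg fun x _ => hp.1 x
    _ = 1 := by rw [hp.2, one_pow]

lemma IsIT.measure_rectangle [MeasurableSpace Ω] [MeasurableSingletonClass Ω]
    {m : ℕ → EuclideanSpace ℝ Ω} {μ : Measure (ℕ → Ω)} (hμ : IsIT m μ) (hm : ∀ i x, 0 ≤ m i x)
    {n : ℕ} (A : Fin n → Finset Ω) :
    μ {ω | ∀ i : Fin n, ω i ∈ A i} = ∏ i : Fin n, ENNReal.ofReal (∑ x ∈ A i, m i x) := by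
  classical
  have hcyl : ∀ y : Fin n → Ω, MeasurableSet {ω : ℕ → Ω | ∀ i : Fin n, ω i = y i} := fun y => by
    simp only [Set.ofPred_forall]
    exact .iInter fun i => measurableSet_eq_fun (measurable_pi_apply _) measurable_const
  have hrect : {ω : ℕ → Ω | ∀ i : Fin n, ω i ∈ A i} =
      ⋃ y ∈ Fintype.piFinset A, {ω | ∀ i : Fin n, ω i = y i} := by
    ext ω
    simp only [Set.mem_ofPred_eq, Set.mem_iUnion, Fintype.mem_piFinset, exists_prop]
    exact ⟨fun h => ⟨fun i => ω i, h, fun _ => rfl⟩, fun ⟨y, hy, he⟩ i => he i ▸ hy i⟩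
  rw [hrect, measure_biUnion_finset (fun y _ y' _ hne => Set.disjoint_left.2 fun ω hω hω' =>
      hne (funext fun i => (hω i).symm.trans (hω' i))) fun y _ => hcyl y]
  simp_rw [ENNReal.ofReal_sum_of_nonneg fun x _ => hm _ x]
  rw [Finset.prod_univ_sum]
  exact sum_congr rfl fun y _ => hμ n y

end Probability

theorem stmt11_general {Ω : Type*} [Fintype Ω] [MeasurableSpace Ω]
    [MeasurableSingletonClass Ω]
    (M : Set (EuclideanSpace ℝ Ω)) (hM : M.Nonempty) (hMsub : M ⊆ probVec Ω)
    (N : Set (EuclideanSpace ℝ Ω)) (hNcl : IsClosed N)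
    (hNconn : IsConnected N) (hNsub : N ⊆ closure (convexHull ℝ M))
    (IT : (ℕ → EuclideanSpace ℝ Ω) → Measure (ℕ → Ω))
    (hIT : ∀ m : ℕ → EuclideanSpace ℝ Ω, (∀ i, m i ∈ M) → IsIT m (IT m))
    (n : ℕ) (A : Fin n → Finset Ω) :
    (⨅ m ∈ {m : ℕ → EuclideanSpace ℝ Ω | (∀ i, m i ∈ M) ∧ clusterPts (cesaro m) = N},
        IT m {ω : ℕ → Ω | ∀ i : Fin n, ω (i : ℕ) ∈ A i}) =
      (⨅ m ∈ {m : ℕ → EuclideanSpace ℝ Ω | ∀ i, m i ∈ M},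
        IT m {ω : ℕ → Ω | ∀ i : Fin n, ω (i : ℕ) ∈ A i}) ∧
    (⨅ m ∈ {m : ℕ → EuclideanSpace ℝ Ω | ∀ i, m i ∈ M},
        IT m {ω : ℕ → Ω | ∀ i : Fin n, ω (i : ℕ) ∈ A i}) =
      ⨅ (m : Fin n → EuclideanSpace ℝ Ω) (_ : ∀ i, m i ∈ M),
        ∏ i : Fin n, ENNReal.ofReal (∑ x ∈ A i, m i x) := by
  have hrect : ∀ m, (∀ i, m i ∈ M) → IT m {ω : ℕ → Ω | ∀ i : Fin n, ω i ∈ A i} =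
      ∏ i : Fin n, ENNReal.ofReal (∑ x ∈ A i, m i x) := fun m hm =>
    (hIT m hm).measure_rectangle (fun i => (hMsub (hm i)).1) A
  have hMbdd : Bornology.IsBounded M := Metric.isBounded_closedBall.subset fun p hp =>
    mem_closedBall_zero_iff.2 (norm_le_one_of_mem_probVec (hMsub hp))
  obtain ⟨t, htN, ht, hNt⟩ := hNconn.isPreconnected.exists_seq_tendsto_dist_succ
    (.of_separableSpace N) hNconn.nonempty
  have htN' : clusterPts t = N :=
    Set.Subset.antisymm (fun c hc => hNcl.mem_of_mapClusterPt hc (.of_forall htN)) hNt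
  refine ⟨le_antisymm (le_iInf₂ fun m hm => ?_) (biInf_mono fun m hm => hm.1),
    le_antisymm (le_iInf₂ fun m hm => ?_) (le_iInf₂ fun m hm => ?_)⟩
  · obtain ⟨x, hxM, hxm, hx⟩ :=
      exists_seq_clusterPts_average_eq hMbdd (fun j => hNsub (htN j)) ht hm n
    refine iInf₂_le_of_le x ⟨hxM, hx.trans htN'⟩ (le_of_eq ?_)
    rw [hrect x hxM, hrect m hm]
    exact prod_congr rfl fun i _ => by rw [hxm i i.isLt]
  · obtain ⟨p, hp⟩ := hM
    let x : ℕ → EuclideanSpace ℝ Ω := fun i => if h : i < n then m ⟨i, h⟩ else p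
    have hxM : ∀ i, x i ∈ M := fun i => by
      by_cases h : i < n
      · simpa [x, h] using hm ⟨i, h⟩
      · simpa [x, h] using hp
    refine iInf₂_le_of_le x hxM (le_of_eq ?_)
    rw [hrect x hxM]
    exact prod_congr rfl fun i _ => by simp [x]
  · exact iInf₂_le_of_le (fun i : Fin n => m i) (fun i => hm i) (hrect m hm).ge

/-- On rectangles (finite-dimensional cylinder events), the lower
probabilities of the models `P̲_{M→N}` and `P̲_M` agree, and both equal the infimum of the
corresponding finite products over choices of measures from `M`. -/
theorem stmt11 {Ω : Type*} [Fintype Ω] [DecidableEq Ω] [MeasurableSpace Ω]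
    [MeasurableSingletonClass Ω] (hcard : 1 < Fintype.card Ω)
    (M : Set (EuclideanSpace ℝ Ω)) (hM : M.Nonempty) (hMsub : M ⊆ probVec Ω)
    (N : Set (EuclideanSpace ℝ Ω)) (hNne : N.Nonempty) (hNcl : IsClosed N)
    (hNconn : IsConnected N) (hNsub : N ⊆ closure (convexHull ℝ M))
    (IT : (ℕ → EuclideanSpace ℝ Ω) → Measure (ℕ → Ω))
    (hIT : ∀ m : ℕ → EuclideanSpace ℝ Ω, (∀ i, m i ∈ M) → IsIT m (IT m))
    (n : ℕ) (A : Fin n → Finset Ω) :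
    (⨅ m ∈ {m : ℕ → EuclideanSpace ℝ Ω | (∀ i, m i ∈ M) ∧ clusterPts (cesaro m) = N},
        IT m {ω : ℕ → Ω | ∀ i : Fin n, ω (i : ℕ) ∈ A i}) =
      (⨅ m ∈ {m : ℕ → EuclideanSpace ℝ Ω | ∀ i, m i ∈ M},
        IT m {ω : ℕ → Ω | ∀ i : Fin n, ω (i : ℕ) ∈ A i}) ∧
    (⨅ m ∈ {m : ℕ → EuclideanSpace ℝ Ω | ∀ i, m i ∈ M},
        IT m {ω : ℕ → Ω | ∀ i : Fin n, ω (i : ℕ) ∈ A i}) =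
      ⨅ (m : Fin n → EuclideanSpace ℝ Ω) (_ : ∀ i, m i ∈ M),
        ∏ i : Fin n, ENNReal.ofReal (∑ x ∈ A i, m i x) :=
  stmt11_general M hM hMsub N hNcl hNconn hNsub IT hIT n A
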